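/- arXiv:2408.06282 — 2 statements merged into one kernel-verified Lean document; each statement's English description precedes it below -/
import Mathlib

section
/- Let C be an almost MDS code over F_q with parameters [n, k, n-k] satisfying k·A_{n-k} + A_{n-k+1} = (q-1)·binomial(n, n-k+1). Then C is a near MDS code, i.e., the dual code C^⊥ is an AMDS code with parameters [n, n-k, k]. -/
open Finset

/-- The submodule of vectors supported in a finset `I`. -/
def suppCode (F : Type*) [Field F] (n : ℕ) (I : Finset (Fin n)) :
    Submodule F (Fin n → F) where
  carrier := {c | ∀ i, i ∉ I → c i = 0}
  add_mem' := by
    intro a b ha hb i hi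
    simp [ha i hi, hb i hi]
  zero_mem' := by
    intro i _
    rfl
  smul_mem' := by
    intro r a ha i hi
    simp [ha i hi]

/-- `C` is an `[n, k, n-k]` almost MDS code. -/
def IsAMDS (F : Type*) [Field F] [DecidableEq F] (n k : ℕ)
    (C : Submodule F (Fin n → F)) : Prop :=
  Module.finrank F C = k ∧
  (∀ c ∈ C, c ≠ 0 → n - k ≤ hammingNorm c) ∧
  (∃ c ∈ C, c ≠ 0 ∧ hammingNorm c = n - k)

/-- The Euclidean dual code. -/
def dualCode {F : Type*} [Field F] {n : ℕ} (C : Submodule F (Fin n → F)) :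
    Submodule F (Fin n → F) where
  carrier := {x | ∀ c ∈ C, ∑ i, x i * c i = 0}
  add_mem' := by
    intro a b ha hb c hc
    simp [Pi.add_apply, add_mul, Finset.sum_add_distrib, ha c hc, hb c hc]
  zero_mem' := by
    intro c _
    simp
  smul_mem' := by
    intro r a ha c hc
    simp [Pi.smul_apply, smul_eq_mul, mul_assoc, ← Finset.mul_sum, ha c hc]

/-!
For every set `S` of `n - k + 1` coordinates a dimension count gives a nonzero codeword of `C`
supported in `S`, so `C` has at least `q - 1` nonzero words supported in `S`. Double counting the
pairs `(c, S)` with `supp c ⊆ S` shows that these numbers add up to `k A_{n-k} + A_{n-k+1}`; the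
hypothesis therefore forces every such subcode to be one-dimensional. Since
`C^⊥ ∩ F^T = (C + F^{Tᶜ})^⊥` has dimension `|T| - k + dim (C ∩ F^{Tᶜ})`, no nonzero dual word is
supported on `k - 1` coordinates, while the complement of the support of a word of weight `n - k`
supports one.
-/

open Module

section LinearAlgebra

variable {F : Type*} [Field F] {n : ℕ}

lemma mem_suppCode {S : Finset (Fin n)} {c : Fin n → F} :
    c ∈ suppCode F n S ↔ ∀ i ∉ S, c i = 0 := Iff.rfl

lemma suppCode_eq_ker_funLeft (S : Finset (Fin n)) :
    suppCode F n S = LinearMap.ker (LinearMap.funLeft F F (Subtype.val : ↥Sᶜ → Fin n)) := by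
  ext c
  simp [mem_suppCode, funext_iff, LinearMap.funLeft]

lemma finrank_suppCode (S : Finset (Fin n)) : finrank F (suppCode F n S) = #S := by
  have h := LinearMap.finrank_range_add_finrank_ker
    (LinearMap.funLeft F F (Subtype.val : ↥Sᶜ → Fin n))
  rw [LinearMap.range_eq_top.mpr (LinearMap.funLeft_surjective_of_injective _ _ _
    Subtype.val_injective), finrank_top, ← suppCode_eq_ker_funLeft] at h
  simp only [finrank_fintype_fun_eq_card, Fintype.card_coe, card_compl, Fintype.card_fin] at h
  have := card_le_univ S
  simp only [Fintype.card_fin] at this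
  omega

lemma dualCode_eq_comap (C : Submodule F (Fin n → F)) :
    dualCode C = C.dualAnnihilator.comap (dotProductEquiv F (Fin n)).toLinearMap := by
  ext x
  simp [dualCode, Submodule.mem_dualAnnihilator, dotProduct]

lemma finrank_dualCode_add_finrank (C : Submodule F (Fin n → F)) :
    finrank F (dualCode C) + finrank F C = n := by
  rw [dualCode_eq_comap, Submodule.comap_equiv_eq_map_symm, LinearEquiv.finrank_map_eq,
    add_comm, Subspace.finrank_add_finrank_dualAnnihilator_eq, finrank_fin_fun]

lemma dualCode_sup (C D : Submodule F (Fin n → F)) :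
    dualCode (C ⊔ D) = dualCode C ⊓ dualCode D := by
  simp only [dualCode_eq_comap, Submodule.dualAnnihilator_sup_eq, Submodule.comap_inf]

lemma dualCode_suppCode (S : Finset (Fin n)) : dualCode (suppCode F n S) = suppCode F n Sᶜ := by
  ext x
  constructor
  · intro hx i hi
    have hsingle : Pi.single i 1 ∈ suppCode F n S := fun j hj =>
      Pi.single_eq_of_ne (by rintro rfl; simp_all) 1
    simpa [Pi.single_apply] using hx _ hsingle
  · intro hx c hc
    refine sum_eq_zero fun i _ => ?_
    by_cases hi : i ∈ S
    · simp [hx i (by simpa using hi)]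
    · simp [hc i hi]

lemma finrank_dualCode_inf_suppCode_add (C : Submodule F (Fin n → F)) (T : Finset (Fin n)) :
    finrank F ↥(dualCode C ⊓ suppCode F n T) + finrank F C
      = #T + finrank F ↥(C ⊓ suppCode F n Tᶜ) := by
  have hdual := finrank_dualCode_add_finrank (C ⊔ suppCode F n Tᶜ)
  rw [dualCode_sup, dualCode_suppCode, compl_compl] at hdual
  have hsup := Submodule.finrank_sup_add_finrank_inf_eq C (suppCode F n Tᶜ)
  rw [finrank_suppCode, card_compl, Fintype.card_fin] at hsup
  have := card_le_univ T
  simp only [Fintype.card_fin] at this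
  omega

lemma dualCode_inf_suppCode_ne_bot_iff (C : Submodule F (Fin n → F)) (T : Finset (Fin n)) :
    dualCode C ⊓ suppCode F n T ≠ ⊥ ↔ finrank F C < #T + finrank F ↥(C ⊓ suppCode F n Tᶜ) := by
  rw [← finrank_dualCode_inf_suppCode_add, Ne, ← Submodule.finrank_eq_zero]
  omega

lemma finrank_add_card_le_finrank_inf_suppCode (C : Submodule F (Fin n → F)) (S : Finset (Fin n)) :
    finrank F C + #S ≤ n + finrank F ↥(C ⊓ suppCode F n S) := by
  have hsup := Submodule.finrank_sup_add_finrank_inf_eq C (suppCode F n S)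
  have hle := Submodule.finrank_le (C ⊔ suppCode F n S)
  rw [finrank_suppCode] at hsup
  rw [finrank_fin_fun] at hle
  omega

end LinearAlgebra

section Support

variable {F : Type*} [Field F] [DecidableEq F] {n : ℕ}

-- The paper's `A_i`.
noncomputable def weightCount (C : Submodule F (Fin n → F)) (i : ℕ) : ℕ :=
  {c ∈ (C : Set (Fin n → F)) | hammingNorm c = i}.ncard

def hammingSupport (c : Fin n → F) : Finset (Fin n) := {i | c i ≠ 0}

lemma card_hammingSupport (c : Fin n → F) : #(hammingSupport c) = hammingNorm c := rfl

lemma mem_suppCode_iff_hammingSupport_subset {S : Finset (Fin n)} {c : Fin n → F} :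
    c ∈ suppCode F n S ↔ hammingSupport c ⊆ S := by
  simp only [mem_suppCode, hammingSupport, subset_iff, mem_filter, mem_univ, true_and]
  exact forall_congr' fun i => not_imp_comm

lemma mem_suppCode_hammingSupport (c : Fin n → F) : c ∈ suppCode F n (hammingSupport c) :=
  mem_suppCode_iff_hammingSupport_subset.mpr subset_rfl

lemma lt_hammingNorm_of_mem_dualCode {C : Submodule F (Fin n → F)} {r : ℕ} (hr : r ≤ n)
    (hC : ∀ T : Finset (Fin n), #T = r → #T + finrank F ↥(C ⊓ suppCode F n Tᶜ) ≤ finrank F C)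
    {x : Fin n → F} (hx : x ∈ dualCode C) (hx0 : x ≠ 0) : r < hammingNorm x := by
  by_contra! hxr
  obtain ⟨T, hxT, -, hT⟩ := exists_subsuperset_card_eq (subset_univ (hammingSupport x))
    hxr (by simpa using hr)
  have hne : dualCode C ⊓ suppCode F n T ≠ ⊥ := (Submodule.ne_bot_iff _).mpr
    ⟨x, ⟨hx, mem_suppCode_iff_hammingSupport_subset.mpr hxT⟩, hx0⟩
  have := hC T hT
  rw [dualCode_inf_suppCode_ne_bot_iff] at hne
  omega

lemma exists_mem_dualCode_hammingNorm_add_le {C : Submodule F (Fin n → F)} {c : Fin n → F}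
    (hc : c ∈ C) (hc0 : c ≠ 0) (hcn : hammingNorm c + finrank F C ≤ n) :
    ∃ x ∈ dualCode C, x ≠ 0 ∧ hammingNorm x + hammingNorm c ≤ n := by
  set T := (hammingSupport c)ᶜ
  have hT : #T = n - hammingNorm c := by simp [T, card_compl, card_hammingSupport]
  have hcT : C ⊓ suppCode F n Tᶜ ≠ ⊥ := (Submodule.ne_bot_iff _).mpr
    ⟨c, ⟨hc, by simpa [T] using mem_suppCode_hammingSupport c⟩, hc0⟩
  rw [Ne, ← Submodule.finrank_eq_zero] at hcT
  obtain ⟨x, ⟨hx, hxT⟩, hx0⟩ := (Submodule.ne_bot_iff _).mp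
    ((dualCode_inf_suppCode_ne_bot_iff C T).mpr (by omega))
  have hxT := card_le_card (mem_suppCode_iff_hammingSupport_subset.mp hxT)
  rw [card_hammingSupport] at hxT
  exact ⟨x, hx, hx0, by omega⟩

end Support

section Counting

variable {F : Type*} [Field F] [DecidableEq F] {n : ℕ}

lemma card_filter_powersetCard_hammingSupport_subset (c : Fin n → F) {w : ℕ}
    (hc : w ≤ hammingNorm c) :
    #{S ∈ powersetCard (w + 1) univ | hammingSupport c ⊆ S}
      = (if hammingNorm c = w then n - w else 0) + if hammingNorm c = w + 1 then 1 else 0 := by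
  rcases hc.eq_or_lt with hcw | hcw
  · rw [card_filter_powersetCard_subset _ _ _ (subset_univ _)
      (by simp [card_hammingSupport, ← hcw])]
    simp [card_hammingSupport, ← hcw]
  rcases (Nat.succ_le_of_lt hcw).eq_or_lt with hcw' | hcw'
  · rw [card_filter_powersetCard_subset _ _ _ (subset_univ _)
      (by simp [card_hammingSupport, ← hcw'])]
    simp [card_hammingSupport, ← hcw']
  · rw [if_neg hcw.ne', if_neg hcw'.ne', card_eq_zero, filter_eq_empty_iff]
    intro S hS hcS
    have := card_le_card hcS
    rw [mem_powersetCard] at hS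
    rw [card_hammingSupport] at this
    omega

lemma sum_card_filter_hammingSupport_subset (s : Finset (Fin n → F)) {w : ℕ}
    (hs : ∀ c ∈ s, w ≤ hammingNorm c) :
    ∑ S ∈ powersetCard (w + 1) univ, #{c ∈ s | hammingSupport c ⊆ S}
      = (n - w) * #{c ∈ s | hammingNorm c = w} + #{c ∈ s | hammingNorm c = w + 1} :=
  calc ∑ S ∈ powersetCard (w + 1) univ, #{c ∈ s | hammingSupport c ⊆ S}
      = ∑ c ∈ s, #{S ∈ powersetCard (w + 1) univ | hammingSupport c ⊆ S} :=
        (sum_card_bipartiteAbove_eq_sum_card_bipartiteBelow _).symm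
    _ = ∑ c ∈ s, ((if hammingNorm c = w then n - w else 0) +
          if hammingNorm c = w + 1 then 1 else 0) :=
        sum_congr rfl fun c hc => card_filter_powersetCard_hammingSupport_subset c (hs c hc)
    _ = _ := by
        rw [sum_add_distrib, ← sum_filter, ← sum_filter, sum_const, sum_const, smul_eq_mul,
          smul_eq_mul, mul_one, mul_comm]

end Counting

section Rigidity

variable {F : Type*} [Field F] [Fintype F] [DecidableEq F] {n : ℕ}
  (C : Submodule F (Fin n → F)) [DecidablePred (· ∈ C)]

def nonzeroCodewords : Finset (Fin n → F) := {c | c ∈ C ∧ c ≠ 0}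

@[simp]
lemma mem_nonzeroCodewords {c : Fin n → F} : c ∈ nonzeroCodewords C ↔ c ∈ C ∧ c ≠ 0 := by
  simp [nonzeroCodewords]

lemma weightCount_eq_card {i : ℕ} (hi : i ≠ 0) :
    weightCount C i = #{c ∈ nonzeroCodewords C | hammingNorm c = i} := by
  rw [weightCount, ← Set.ncard_coe_finset]
  congr 1
  ext c
  simp only [coe_filter, mem_nonzeroCodewords, Set.mem_ofPred_eq, SetLike.mem_coe, and_assoc,
    and_congr_right_iff]
  rintro -
  simpa using fun hci hc => hi (by simp [← hci, hc])

lemma card_filter_nonzeroCodewords_add_one (T : Finset (Fin n)) :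
    #{c ∈ nonzeroCodewords C | hammingSupport c ⊆ T} + 1
      = Fintype.card F ^ finrank F ↥(C ⊓ suppCode F n T) := by
  have hW : ((C ⊓ suppCode F n T : Submodule F (Fin n → F)) : Set (Fin n → F))
      = insert 0 ↑{c ∈ nonzeroCodewords C | hammingSupport c ⊆ T} := by
    ext c
    by_cases hc : c = 0
    · simp [hc]
    · simp [hc, mem_suppCode_iff_hammingSupport_subset]
  rw [← Nat.card_eq_fintype_card, ← Module.natCard_eq_pow_finrank, ← SetLike.coe_sort_coe,
    Nat.card_coe_set_eq, hW, Set.ncard_insert_of_notMem (by simp), Set.ncard_coe_finset]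

variable {C}

lemma finrank_inf_suppCode_eq_one {w : ℕ} (hw : 0 < w)
    (hCw : n ≤ finrank F C + w) (hmin : ∀ c ∈ C, c ≠ 0 → w ≤ hammingNorm c)
    (hid : (n - w) * weightCount C w + weightCount C (w + 1)
      = (Fintype.card F - 1) * n.choose (w + 1))
    {S : Finset (Fin n)} (hS : #S = w + 1) : finrank F ↥(C ⊓ suppCode F n S) = 1 := by
  have hge : ∀ T ∈ powersetCard (w + 1) univ,
      Fintype.card F - 1 ≤ #{c ∈ nonzeroCodewords C | hammingSupport c ⊆ T} := by
    intro T hT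
    rw [mem_powersetCard] at hT
    have hpos := finrank_add_card_le_finrank_inf_suppCode C T
    have hq : Fintype.card F ^ 1 ≤ Fintype.card F ^ finrank F ↥(C ⊓ suppCode F n T) :=
      Nat.pow_le_pow_right Fintype.card_pos (by omega)
    have := card_filter_nonzeroCodewords_add_one C T
    rw [pow_one] at hq
    omega
  have hsum : ∑ T ∈ powersetCard (w + 1) (univ : Finset (Fin n)), (Fintype.card F - 1)
      = ∑ T ∈ powersetCard (w + 1) univ, #{c ∈ nonzeroCodewords C | hammingSupport c ⊆ T} := by
    rw [sum_card_filter_hammingSupport_subset _ fun c hc => hmin c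
      ((mem_nonzeroCodewords C).mp hc).1 ((mem_nonzeroCodewords C).mp hc).2,
      ← weightCount_eq_card C hw.ne', ← weightCount_eq_card C w.succ_ne_zero, hid,
      sum_const, card_powersetCard, card_univ, Fintype.card_fin, smul_eq_mul, mul_comm]
  have hNS := (sum_eq_sum_iff_of_le hge).mp hsum S (mem_powersetCard.mpr ⟨subset_univ S, hS⟩)
  have hpow : Fintype.card F ^ finrank F ↥(C ⊓ suppCode F n S) = Fintype.card F ^ 1 := by
    rw [← card_filter_nonzeroCodewords_add_one, ← hNS, pow_one,
      Nat.sub_add_cancel Fintype.card_pos]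
  exact Nat.pow_right_injective Fintype.one_lt_card hpow

end Rigidity

/-- an AMDS `[n,k,n-k]` code with
`k·A_{n-k} + A_{n-k+1} = (q-1)·C(n, n-k+1)` is near MDS, i.e. its dual is an
AMDS code with parameters `[n, n-k, k]`. -/
theorem stmt5 {F : Type*} [Field F] [Fintype F] [DecidableEq F] {n k : ℕ}
    (C : Submodule F (Fin n → F)) (hC : IsAMDS F n k C) (hkn : k ≤ n)
    (hid : k * {c ∈ (C : Set (Fin n → F)) | hammingNorm c = n - k}.ncard +
      {c ∈ (C : Set (Fin n → F)) | hammingNorm c = n - k + 1}.ncard =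
      (Fintype.card F - 1) * n.choose (n - k + 1)) :
    IsAMDS F n (n - k) (dualCode C) := by
  classical
  obtain ⟨hrank, hmin, c0, hc0C, hc0ne, hc0wt⟩ := hC
  have hk : 0 < k := by
    have hC : C ≠ ⊥ := (Submodule.ne_bot_iff C).mpr ⟨c0, hc0C, hc0ne⟩
    rw [Ne, ← Submodule.finrank_eq_zero] at hC
    omega
  have hnk : 0 < n - k := hc0wt ▸ hammingNorm_pos_iff.mpr hc0ne
  have hone (S : Finset (Fin n)) (hS : #S = n - k + 1) : finrank F ↥(C ⊓ suppCode F n S) = 1 :=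
    finrank_inf_suppCode_eq_one hnk (by omega) hmin (by rwa [Nat.sub_sub_self hkn]) hS
  have hdual_min (x) (hx : x ∈ dualCode C) (hx0 : x ≠ 0) : k ≤ hammingNorm x := by
    suffices k - 1 < hammingNorm x by omega
    refine lt_hammingNorm_of_mem_dualCode (by omega) (fun T hT => ?_) hx hx0
    rw [hrank, hone Tᶜ (by rw [card_compl, Fintype.card_fin]; omega)]
    omega
  obtain ⟨x, hx, hx0, hxw⟩ := exists_mem_dualCode_hammingNorm_add_le hc0C hc0ne (by omega)
  refine ⟨by have := finrank_dualCode_add_finrank C; omega, ?_, x, hx, hx0, ?_⟩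
  · rwa [Nat.sub_sub_self hkn]
  · have := hdual_min x hx hx0
    omega
end

section
/- Let q = 3^m with m a positive integer and let U_{q+1} be the group of (q+1)-th roots of unity in F_{q^2}. If x, y ∈ U_{q+1} are distinct, or if x, y ∈ U_{q+1}\{1}, then x + y + xy ≠ 0 and x + y + 1 ≠ 0. -/
/-!
Write `q = 3 ^ m`. On `U_{q+1}` the Frobenius `z ↦ z ^ q` is inversion, so raising `x + y + x y`
to the `q`-th power and multiplying by `x y` gives `x + y + 1`, and vice versa: the two expressions
vanish together. If both vanish then `x y = 1` and `x + y = -1`, so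
`x ^ 2 + x + 1 = (x - 1) ^ 2 = 0` in characteristic `3`, which forces `x = y = 1`.
-/

theorem charP_three_of_card_eq_pow {E : Type*} [Field E] [Fintype E] {m : ℕ}
    (hE : Fintype.card E = (3 ^ m) ^ 2) : CharP E 3 := by
  have hcard : (((3 ^ m) ^ 2 : ℕ) : E) = 0 := hE ▸ FiniteField.cast_card_eq_zero E
  push_cast at hcard
  exact (CharP.charP_iff_prime_eq_zero Nat.prime_three).mpr
    (by exact_mod_cast eq_zero_of_pow_eq_zero (eq_zero_of_pow_eq_zero hcard))

section Frobenius

variable {R : Type*} [CommRing R] {p : ℕ} [ExpChar R p] (n : ℕ) {x y : R}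

theorem add_add_mul_pow_mul_eq_add_add_one (hx : x ^ (p ^ n + 1) = 1)
    (hy : y ^ (p ^ n + 1) = 1) : (x + y + x * y) ^ p ^ n * (x * y) = x + y + 1 := by
  rw [add_pow_expChar_pow, add_pow_expChar_pow, mul_pow]
  linear_combination (y + 1) * hx + (x + x ^ (p ^ n + 1)) * hy

theorem add_add_one_pow_mul_eq_add_add_mul (hx : x ^ (p ^ n + 1) = 1)
    (hy : y ^ (p ^ n + 1) = 1) : (x + y + 1) ^ p ^ n * (x * y) = x + y + x * y := by
  rw [add_pow_expChar_pow, add_pow_expChar_pow, one_pow]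
  linear_combination y * hx + x * hy

theorem add_add_mul_eq_zero_iff_add_add_one_eq_zero (hx : x ^ (p ^ n + 1) = 1)
    (hy : y ^ (p ^ n + 1) = 1) : x + y + x * y = 0 ↔ x + y + 1 = 0 := by
  have hq : p ^ n ≠ 0 := (expChar_pow_pos R p n).ne'
  constructor <;> intro h0
  · rw [← add_add_mul_pow_mul_eq_add_add_one n hx hy, h0, zero_pow hq, zero_mul]
  · rw [← add_add_one_pow_mul_eq_add_add_mul n hx hy, h0, zero_pow hq, zero_mul]

end Frobenius

theorem eq_one_of_sq_add_add_one_eq_zero {R : Type*} [CommRing R] [IsDomain R] [CharP R 3]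
    {x : R} (h : x ^ 2 + x + 1 = 0) : x = 1 := by
  have h3 : (3 : R) = 0 := by exact_mod_cast CharP.cast_eq_zero R 3
  have hsq : (x - 1) ^ 2 = 0 := by linear_combination h - x * h3
  exact sub_eq_zero.mp (eq_zero_of_pow_eq_zero hsq)

theorem eq_one_and_eq_one_of_add_add_mul_eq_zero {R : Type*} [CommRing R] [IsDomain R]
    [CharP R 3] {x y : R} (hmul : x + y + x * y = 0) (hone : x + y + 1 = 0) :
    x = 1 ∧ y = 1 := by
  have hx : x = 1 := eq_one_of_sq_add_add_one_eq_zero (by linear_combination x * hone - hmul + hone)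
  refine ⟨hx, ?_⟩
  have h3 : (3 : R) = 0 := by exact_mod_cast CharP.cast_eq_zero R 3
  linear_combination hone - hx - h3

theorem stmt9_general {E : Type*} [Field E] [Fintype E] (m : ℕ)
    (hE : Fintype.card E = (3 ^ m) ^ 2)
    (x y : E) (hx : x ^ (3 ^ m + 1) = 1) (hy : y ^ (3 ^ m + 1) = 1)
    (h : x ≠ y ∨ (x ≠ 1 ∧ y ≠ 1)) :
    x + y + x * y ≠ 0 ∧ x + y + 1 ≠ 0 := by
  have := charP_three_of_card_eq_pow hE
  have hiff := add_add_mul_eq_zero_iff_add_add_one_eq_zero m hx hy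
  have not_both : ¬(x + y + x * y = 0 ∧ x + y + 1 = 0) := fun ⟨hmul, hone⟩ => by
    obtain ⟨rfl, rfl⟩ := eq_one_and_eq_one_of_add_add_mul_eq_zero hmul hone
    simp at h
  exact ⟨fun h0 => not_both ⟨h0, hiff.mp h0⟩, fun h0 => not_both ⟨hiff.mpr h0, h0⟩⟩

/-- if `x, y ∈ U_{q+1}` are distinct, or both differ from `1`,
then `x+y+xy ≠ 0` and `x+y+1 ≠ 0`. -/
theorem stmt9 {E : Type*} [Field E] [Fintype E] (m : ℕ) (hm : 0 < m)
    (hE : Fintype.card E = (3 ^ m) ^ 2)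
    (x y : E) (hx : x ^ (3 ^ m + 1) = 1) (hy : y ^ (3 ^ m + 1) = 1)
    (h : x ≠ y ∨ (x ≠ 1 ∧ y ≠ 1)) :
    x + y + x * y ≠ 0 ∧ x + y + 1 ≠ 0 :=
  stmt9_general m hE x y hx hy h
end
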